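/- Let (X,d) be a metric space and μ a Borel measure on X that is finite on every bounded Borel set and positive on every nonempty open set, and let s > 0. If there is a constant C > 0 such that ‖A_s f‖_{L^1(μ)} ≤ C ‖f‖_{L^1(μ)} for every f ∈ L^1(μ), then a_s(y) ≤ C for μ-almost every y, i.e., ‖a_s‖_{L^∞(μ)} ≤ C. -/

import Mathlib

/-!
Testing the L¹ bound on `f = 1_E` and applying Tonelli to the kernel `1_{B(x,s)}(y) / μ(B(x,s))`
gives `∫_E a_s dμ = ‖A_s 1_E‖₁ ≤ C μ(E)` for every `E` of finite measure, hence `a_s ≤ C` a.e.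
since `μ` is σ-finite. Tonelli needs `{(x, y) | d(x, y) ≤ s}` to be product-measurable, which
holds because `X` is second countable: disjoint open balls have positive measure, so under an
s-finite measure every `ε`-separated set is countable.
-/

open MeasureTheory Metric ENNReal

/-- The averaging operator `A_s f(x) = (1/μ(B^cl(x,s))) ∫_{B^cl(x,s)} f dμ`
over closed balls. -/
noncomputable def avgOp {X : Type*} [MetricSpace X] [MeasurableSpace X]
    (μ : Measure X) (r : ℝ) (f : X → ℝ) (x : X) : ℝ :=
  (μ (closedBall x r)).toReal⁻¹ * ∫ y in closedBall x r, f y ∂μ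

/-- The conjugate function `a_s(y) = ∫_X 1_{B^cl(y,s)}(x) / μ(B^cl(x,s)) dμ(x)`. -/
noncomputable def conjFn {X : Type*} [MetricSpace X] [MeasurableSpace X]
    (μ : Measure X) (s : ℝ) (y : X) : ℝ≥0∞ :=
  ∫⁻ x in closedBall y s, (μ (closedBall x s))⁻¹ ∂μ

theorem sigmaFinite_of_forall_isBounded_measure_lt_top {X : Type*} [PseudoMetricSpace X]
    [MeasurableSpace X] {μ : Measure X} (h : ∀ s : Set X, Bornology.IsBounded s → μ s < ∞) :
    SigmaFinite μ := by
  rcases isEmpty_or_nonempty X with hX | ⟨⟨x₀⟩⟩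
  · have : IsFiniteMeasure μ := ⟨h _ (by simp [Set.univ_eq_empty_iff.2 hX])⟩
    infer_instance
  · exact ⟨⟨⟨fun n => closedBall x₀ n, fun _ => trivial, fun _ => h _ isBounded_closedBall,
      iUnion_closedBall_nat x₀⟩⟩⟩

theorem Metric.IsSeparated.countable_of_isOpenPosMeasure {X : Type*} [PseudoMetricSpace X]
    [MeasurableSpace X] [OpensMeasurableSpace X] (μ : Measure X) [SFinite μ] [μ.IsOpenPosMeasure]
    {ε : ℝ≥0∞} (hε : ε ≠ 0) {N : Set X} (hN : IsSeparated ε N) : N.Countable := by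
  have hdisj : Pairwise fun x y : N => Disjoint (eball (x : X) (ε / 2)) (eball y (ε / 2)) :=
    fun x y hxy => eball_disjoint <| by
      rw [ENNReal.add_halves]
      exact (hN x.2 y.2 (Subtype.coe_injective.ne hxy)).le
  have hcount := Measure.countable_meas_pos_of_disjoint_iUnion (μ := μ)
    (fun x : N => measurableSet_eball) hdisj
  simp only [measure_eball_pos μ _ (ENNReal.half_pos hε).ne', Set.ofPred_true,
    Set.countable_univ_iff] at hcount
  exact Set.countable_coe_iff.mp hcount

theorem Metric.secondCountable_of_isOpenPosMeasure {X : Type*} [PseudoMetricSpace X]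
    [MeasurableSpace X] [OpensMeasurableSpace X] (μ : Measure X) [SFinite μ] [μ.IsOpenPosMeasure] :
    SecondCountableTopology X := by
  refine secondCountable_of_almost_dense_set fun ε hε => ?_
  obtain ⟨N, hN⟩ := zorn_subset {N : Set X | IsSeparated (ε.toNNReal : ℝ≥0∞) N}
    fun c hc hchain => ⟨⋃₀ c, (Set.pairwise_sUnion hchain.directedOn).2 hc,
      fun _ => Set.subset_sUnion_of_mem⟩
  have hcover : IsCover ε.toNNReal Set.univ N := .of_maximal_isSeparated (by simpa using hN)
  refine ⟨N, hN.1.countable_of_isOpenPosMeasure μ (by simpa using hε), fun x => ?_⟩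
  obtain ⟨y, hyN, hxy⟩ := Set.mem_iUnion₂.mp (isCover_iff_subset_iUnion_closedBall.mp hcover
    (Set.mem_univ x))
  exact ⟨y, hyN, by simpa [hε.le] using hxy⟩

section
variable {X : Type*} [MetricSpace X] [MeasurableSpace X] {μ : Measure X} {s : ℝ}

theorem enorm_avgOp_of_nonneg {f : X → ℝ} {x : X} (hf : IntegrableOn f (closedBall x s) μ)
    (hf0 : 0 ≤ f) :
    ‖avgOp μ s f x‖ₑ = (μ (closedBall x s))⁻¹ * ∫⁻ y in closedBall x s, ‖f y‖ₑ ∂μ := by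
  have hint : ∫ y in closedBall x s, f y ∂μ = (∫⁻ y in closedBall x s, ‖f y‖ₑ ∂μ).toReal := by
    rw [integral_eq_lintegral_of_nonneg_ae (.of_forall hf0) hf.aestronglyMeasurable]
    simp_rw [Real.enorm_eq_ofReal (hf0 _)]
  have hfin : (μ (closedBall x s))⁻¹ * ∫⁻ y in closedBall x s, ‖f y‖ₑ ∂μ ≠ ∞ := by
    rcases eq_or_ne (μ (closedBall x s)) 0 with h0 | h0
    · simp [Measure.restrict_eq_zero.mpr h0]
    · exact mul_ne_top (inv_ne_top.mpr h0) hf.2.ne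
  rw [avgOp, hint, ← toReal_inv, ← toReal_mul, Real.enorm_eq_ofReal toReal_nonneg,
    ofReal_toReal hfin]

variable (μ s) in
noncomputable def avgKernel : X × X → ℝ≥0∞ :=
  {p | dist p.2 p.1 ≤ s}.indicator fun p => (μ (closedBall p.1 s))⁻¹

theorem avgKernel_apply (x y : X) :
    avgKernel μ s (x, y) = (closedBall x s).indicator (fun _ => (μ (closedBall x s))⁻¹) y := rfl

theorem avgKernel_apply' (x y : X) :
    avgKernel μ s (x, y) = (closedBall y s).indicator (fun x => (μ (closedBall x s))⁻¹) x := by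
  simp only [avgKernel, Set.indicator, Set.mem_ofPred_eq, mem_closedBall, dist_comm]

variable [OpensMeasurableSpace X]

theorem conjFn_eq_lintegral_avgKernel (y : X) :
    conjFn μ s y = ∫⁻ x, avgKernel μ s (x, y) ∂μ := by
  simp_rw [avgKernel_apply', lintegral_indicator measurableSet_closedBall, conjFn]

variable [SecondCountableTopology X] [SFinite μ]

variable (s) in
theorem measurable_measure_closedBall : Measurable fun x => μ (closedBall x s) := by
  have h := measurable_measure_prodMk_left (ν := μ)
    (measurableSet_le (measurable_snd.dist measurable_fst) (measurable_const (a := s)))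
  simpa only [Set.preimage_ofPred_eq, ← mem_closedBall, Set.ofPred_mem_eq] using h

theorem measurable_avgKernel : Measurable (avgKernel μ s) :=
  ((measurable_measure_closedBall s).comp measurable_fst).inv.indicator
    (measurableSet_le (measurable_snd.dist measurable_fst) measurable_const)

theorem measurable_conjFn : Measurable (conjFn μ s) := by
  rw [funext conjFn_eq_lintegral_avgKernel]
  exact measurable_avgKernel.lintegral_prod_left'

theorem lintegral_inv_measure_mul_setLIntegral_closedBall {g : X → ℝ≥0∞} (hg : AEMeasurable g μ) :
    ∫⁻ x, (μ (closedBall x s))⁻¹ * ∫⁻ y in closedBall x s, g y ∂μ ∂μ =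
      ∫⁻ y, conjFn μ s y * g y ∂μ := by
  calc ∫⁻ x, (μ (closedBall x s))⁻¹ * ∫⁻ y in closedBall x s, g y ∂μ ∂μ
      = ∫⁻ x, ∫⁻ y, avgKernel μ s (x, y) * g y ∂μ ∂μ := by
        refine lintegral_congr fun x => ?_
        simp_rw [avgKernel_apply, ← Set.indicator_mul_left]
        rw [lintegral_indicator measurableSet_closedBall, lintegral_const_mul'' _ hg.restrict]
    _ = ∫⁻ y, ∫⁻ x, avgKernel μ s (x, y) * g y ∂μ ∂μ :=
        lintegral_lintegral_swap (measurable_avgKernel.aemeasurable.mul hg.comp_snd)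
    _ = ∫⁻ y, conjFn μ s y * g y ∂μ := by
        refine lintegral_congr fun y => ?_
        have hk : Measurable fun x => avgKernel μ s (x, y) :=
          measurable_avgKernel.comp measurable_prodMk_right
        rw [lintegral_mul_const _ hk, conjFn_eq_lintegral_avgKernel]

theorem eLpNorm_one_avgOp_of_nonneg {f : X → ℝ} (hf : Integrable f μ) (hf0 : 0 ≤ f) :
    eLpNorm (avgOp μ s f) 1 μ = ∫⁻ y, conjFn μ s y * ‖f y‖ₑ ∂μ := by
  rw [eLpNorm_one_eq_lintegral_enorm,
    ← lintegral_inv_measure_mul_setLIntegral_closedBall hf.aemeasurable.enorm]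
  exact lintegral_congr fun x => enorm_avgOp_of_nonneg hf.integrableOn hf0

end

theorem ae_conjFn_le_of_eLpNorm_avgOp_le {X : Type*} [MetricSpace X] [MeasurableSpace X]
    [OpensMeasurableSpace X] [SecondCountableTopology X] {μ : Measure X} [SigmaFinite μ] {s : ℝ}
    {C : ℝ≥0∞} (hbd : ∀ f : X → ℝ, Integrable f μ → eLpNorm (avgOp μ s f) 1 μ ≤ C * eLpNorm f 1 μ) :
    ∀ᵐ y ∂μ, conjFn μ s y ≤ C := by
  refine ae_le_of_forall_setLIntegral_le_of_sigmaFinite measurable_conjFn fun E hE hμE => ?_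
  have hint : Integrable (E.indicator fun _ => (1 : ℝ)) μ :=
    (integrable_indicator_iff hE).2 (integrableOn_const hμE.ne)
  have h := hbd _ hint
  rw [eLpNorm_one_avgOp_of_nonneg hint (Set.indicator_nonneg fun _ _ => zero_le_one),
    eLpNorm_indicator_const hE one_ne_zero one_ne_top] at h
  have hlhs : ∫⁻ y, conjFn μ s y * ‖E.indicator (fun _ => (1 : ℝ)) y‖ₑ ∂μ =
      ∫⁻ y in E, conjFn μ s y ∂μ := by
    rw [← lintegral_indicator hE]
    congr with y
    by_cases hy : y ∈ E <;> simp [hy]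
  rw [hlhs] at h
  simpa [setLIntegral_const, mul_comm] using h

theorem stmt2_general {X : Type*} [MetricSpace X] [MeasurableSpace X] [BorelSpace X]
    (μ : Measure X)
    (hfin : ∀ s : Set X, Bornology.IsBounded s → μ s < ⊤)
    (hpos : ∀ U : Set X, IsOpen U → U.Nonempty → 0 < μ U)
    (s : ℝ) (C : ℝ)
    (hbd : ∀ f : X → ℝ, Integrable f μ →
      eLpNorm (avgOp μ s f) 1 μ ≤ ENNReal.ofReal C * eLpNorm f 1 μ) :
    (∀ᵐ y ∂μ, conjFn μ s y ≤ ENNReal.ofReal C) ∧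
      essSup (conjFn μ s) μ ≤ ENNReal.ofReal C := by
  have : SigmaFinite μ := sigmaFinite_of_forall_isBounded_measure_lt_top hfin
  have : μ.IsOpenPosMeasure := ⟨fun U hU hne => (hpos U hU hne).ne'⟩
  have : SecondCountableTopology X := secondCountable_of_isOpenPosMeasure μ
  have hae := ae_conjFn_le_of_eLpNorm_avgOp_le hbd
  exact ⟨hae, essSup_le_of_ae_le _ hae⟩

/-- If `‖A_s f‖_{L¹(μ)} ≤ C ‖f‖_{L¹(μ)}` for every `f ∈ L¹(μ)`, then `a_s(y) ≤ C`
for `μ`-almost every `y`, i.e. `‖a_s‖_{L^∞(μ)} ≤ C`. -/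
theorem stmt2 {X : Type*} [MetricSpace X] [MeasurableSpace X] [BorelSpace X]
    (μ : Measure X)
    (hfin : ∀ s : Set X, Bornology.IsBounded s → μ s < ⊤)
    (hpos : ∀ U : Set X, IsOpen U → U.Nonempty → 0 < μ U)
    (s : ℝ) (hs : 0 < s) (C : ℝ) (hC : 0 < C)
    (hbd : ∀ f : X → ℝ, Integrable f μ →
      eLpNorm (avgOp μ s f) 1 μ ≤ ENNReal.ofReal C * eLpNorm f 1 μ) :
    (∀ᵐ y ∂μ, conjFn μ s y ≤ ENNReal.ofReal C) ∧
      essSup (conjFn μ s) μ ≤ ENNReal.ofReal C :=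
  stmt2_general μ hfin hpos s C hbd
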